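/- The Yule–Harding second moments of the number of root configurations satisfy s_1 = 0 and, for every n ≥ 2, the recurrence s_n = 1 + (1/(n−1))·Σ_{j=1}^{n−1} s_j·s_{n−j} + (2/(n−1))·Σ_{j=1}^{n−1} s_j + (4/(n−1))·Σ_{j=1}^{n−1} s_j·e_{n−j} + (4/(n−1))·Σ_{j=1}^{n−1} e_j·e_{n−j} + (4/(n−1))·Σ_{j=1}^{n−1} e_j. -/
import Mathlib


/-- Plane binary trees: a leaf, or an ordered pair of plane binary trees. -/
inductive PTree : Type where
  | leaf : PTree
  | node : PTree → PTree → PTree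
deriving DecidableEq

namespace PTree

/-- Number of leaves of a plane binary tree. -/
def leaves : PTree → ℕ
  | leaf => 1
  | node l r => leaves l + leaves r

/-- Number of root ancestral configurations:
`c(leaf) = 0`, `c(node l r) = (c l + 1) * (c r + 1)`. -/
def c : PTree → ℕ
  | leaf => 0
  | node l r => (c l + 1) * (c r + 1)

/-- The finite set of plane binary trees with `n` leaves. -/
def trees : ℕ → Finset PTree
  | 0 => ∅
  | 1 => {leaf}
  | (n+2) =>
      (Finset.Icc 1 (n+1)).attach.biUnion fun j =>
        ((trees j.1) ×ˢ (trees (n+2-j.1))).image fun p => node p.1 p.2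
decreasing_by
  · have h := Finset.mem_Icc.mp j.2; omega
  · have h := Finset.mem_Icc.mp j.2; omega

end PTree

namespace PTree

/-- Yule–Harding weight: `w(leaf) = 1`,
`w(node l r) = w l * w r / (leaves l + leaves r - 1)`. -/
def w : PTree → ℚ
  | leaf => 1
  | node l r => w l * w r / ((leaves l + leaves r - 1 : ℕ) : ℚ)

end PTree

namespace PTree

/-- Yule–Harding mean number of root configurations (`e 0 = 0` since `trees 0 = ∅`). -/
def e (n : ℕ) : ℚ := ∑ t ∈ trees n, w t * (c t : ℚ)

end PTree

namespace PTree

/-- Yule–Harding second moment of the number of root configurations. -/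
def s (n : ℕ) : ℚ := ∑ t ∈ trees n, w t * (c t : ℚ) ^ 2

end PTree

namespace PTree

lemma trees_two (n : ℕ) : trees (n+2) =
    (Finset.Icc 1 (n+1)).attach.biUnion fun j =>
      ((trees j.1) ×ˢ (trees (n+2-j.1))).image fun p => node p.1 p.2 := by
  rw [trees]

lemma leaves_of_mem : ∀ n t, t ∈ trees n → t.leaves = n := by
  intro n
  induction n using Nat.strong_induction_on with
  | _ n ih =>
    match n with
    | 0 => intro t ht; simp [trees] at ht
    | 1 => intro t ht; simp [trees] at ht; subst ht; rfl
    | (m+2) =>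
      intro t ht
      rw [trees_two] at ht
      simp only [Finset.mem_biUnion, Finset.mem_image, Finset.mem_product,
        Finset.mem_attach, true_and] at ht
      obtain ⟨⟨j, hj⟩, ⟨⟨l, r⟩, ⟨hl, hr⟩, rfl⟩⟩ := ht
      have hj' := Finset.mem_Icc.mp hj
      have h1 := ih j (by omega) l hl
      have h2 := ih (m+2-j) (by omega) r hr
      simp only [leaves, h1, h2]; omega

lemma sum_trees (n : ℕ) (f : PTree → ℚ) :
    ∑ t ∈ trees (n+2), f t
      = ∑ j ∈ Finset.Icc 1 (n+1), ∑ p ∈ (trees j) ×ˢ (trees (n+2-j)), f (node p.1 p.2) := by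
  rw [trees_two, Finset.sum_biUnion]
  · rw [← Finset.sum_attach (Finset.Icc 1 (n+1))
      (fun j => ∑ p ∈ (trees j) ×ˢ (trees (n+2-j)), f (node p.1 p.2))]
    refine Finset.sum_congr rfl fun j _ => ?_
    rw [Finset.sum_image]
    rintro ⟨l, r⟩ _ ⟨l', r'⟩ _ h
    simpa using h
  · rintro ⟨x, hx⟩ - ⟨y, hy⟩ - hxy
    apply Finset.disjoint_left.mpr
    rintro t ht ht'
    simp only [Finset.mem_image, Finset.mem_product] at ht ht'
    obtain ⟨⟨l, r⟩, ⟨hl, -⟩, rfl⟩ := ht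
    obtain ⟨⟨l', r'⟩, ⟨hl', -⟩, heq⟩ := ht'
    obtain ⟨rfl, rfl⟩ : l' = l ∧ r' = r := by injection heq with h1 h2; exact ⟨h1, h2⟩
    exact hxy (Subtype.ext ((leaves_of_mem x _ hl).symm.trans (leaves_of_mem y _ hl')))

end PTree
namespace PTree

lemma w_total : ∀ n, 1 ≤ n → ∑ t ∈ trees n, w t = 1 := by
  intro n
  induction n using Nat.strong_induction_on with
  | _ n ih =>
    match n with
    | 0 => intro h; omega
    | 1 => intro _; simp [trees, w]
    | (m+2) =>
      intro _
      rw [sum_trees]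
      have key : ∀ j ∈ Finset.Icc 1 (m+1),
          ∑ p ∈ (trees j) ×ˢ (trees (m+2-j)), w (node p.1 p.2) = 1 / (m+1) := by
        intro j hj
        have hj' := Finset.mem_Icc.mp hj
        have : ∀ p ∈ (trees j) ×ˢ (trees (m+2-j)),
            w (node p.1 p.2) = w p.1 * w p.2 / (m+1) := by
          rintro ⟨l, r⟩ hp
          rw [Finset.mem_product] at hp
          have h1 := leaves_of_mem _ _ hp.1
          have h2 := leaves_of_mem _ _ hp.2
          show w l * w r / ((leaves l + leaves r - 1 : ℕ) : ℚ) = _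
          rw [h1, h2]
          congr 2
          push_cast [show j + (m+2-j) - 1 = m+1 by omega]
          ring
        rw [Finset.sum_congr rfl this, ← Finset.sum_div, Finset.sum_product,
          ← Finset.sum_mul_sum]
        rw [ih j (by omega) (by omega), ih (m+2-j) (by omega) (by omega)]
        push_cast; ring
      rw [Finset.sum_congr rfl key, Finset.sum_const, Nat.card_Icc]
      simp only [nsmul_eq_mul]
      have : ((m+1) : ℚ) ≠ 0 := by positivity
      push_cast
      field_simp

end PTree
namespace PTree

lemma A_eq (k : ℕ) (hk : 1 ≤ k) :
    ∑ t ∈ trees k, w t * ((c t : ℚ) + 1)^2 = s k + 2 * e k + 1 := by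
  have h : ∀ t : PTree, w t * ((c t : ℚ)+1)^2
      = w t * (c t : ℚ)^2 + 2*(w t * (c t : ℚ)) + w t := fun t => by ring
  rw [Finset.sum_congr rfl (fun t _ => h t), Finset.sum_add_distrib,
    Finset.sum_add_distrib, ← Finset.mul_sum, w_total k hk, s, e]

lemma key (m : ℕ) :
    ((m : ℚ) + 1) * s (m+2)
      = ∑ j ∈ Finset.Icc 1 (m+1),
          (s j + 2 * e j + 1) * (s (m+2-j) + 2 * e (m+2-j) + 1) := by
  rw [s, sum_trees]
  have step : ∀ j ∈ Finset.Icc 1 (m+1),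
      ∑ p ∈ (trees j) ×ˢ (trees (m+2-j)), w (node p.1 p.2) * ((c (node p.1 p.2) : ℚ))^2
        = (s j + 2*e j + 1) * (s (m+2-j) + 2*e (m+2-j) + 1) / ((m:ℚ)+1) := by
    intro j hj
    have hj' := Finset.mem_Icc.mp hj
    have h : ∀ p ∈ (trees j) ×ˢ (trees (m+2-j)),
        w (node p.1 p.2) * ((c (node p.1 p.2) : ℚ))^2
          = (w p.1 * ((c p.1 : ℚ)+1)^2) * (w p.2 * ((c p.2 : ℚ)+1)^2) / ((m:ℚ)+1) := by
      rintro ⟨l, r⟩ hp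
      rw [Finset.mem_product] at hp
      have h1 := leaves_of_mem _ _ hp.1
      have h2 := leaves_of_mem _ _ hp.2
      show w l * w r / ((leaves l + leaves r - 1 : ℕ) : ℚ) * ((c (node l r) : ℚ))^2 = _
      rw [h1, h2, show j + (m+2-j) - 1 = m+1 by omega]
      have hc : (c (node l r) : ℚ) = ((c l : ℚ)+1) * ((c r : ℚ)+1) := by
        show ((((c l)+1) * ((c r)+1) : ℕ) : ℚ) = _
        push_cast; ring
      rw [hc]
      push_cast
      ring
    rw [Finset.sum_congr rfl h, ← Finset.sum_div, Finset.sum_product]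
    dsimp only
    rw [← Finset.sum_mul_sum, A_eq j (by omega), A_eq (m+2-j) (by omega)]
  rw [Finset.sum_congr rfl step, ← Finset.sum_div]
  have h0 : ((m:ℚ)+1) ≠ 0 := by positivity
  field_simp

lemma sum_reflect (N : ℕ) (F : ℕ → ℚ) :
    ∑ j ∈ Finset.Icc 1 N, F (N+1-j) = ∑ j ∈ Finset.Icc 1 N, F j := by
  refine Finset.sum_nbij' (fun j => N+1-j) (fun j => N+1-j) ?_ ?_ ?_ ?_ ?_ <;>
    intro a ha <;> simp only [Finset.mem_Icc] at * <;> first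
      | omega
      | exact congrArg F (by omega)

end PTree

namespace PTree

lemma expand_sum (m : ℕ) :
    ∑ j ∈ Finset.Icc 1 (m+1),
        (s j + 2 * e j + 1) * (s (m+2-j) + 2 * e (m+2-j) + 1)
      = (∑ j ∈ Finset.Icc 1 (m+1), s j * s (m+2-j))
        + 4 * (∑ j ∈ Finset.Icc 1 (m+1), s j * e (m+2-j))
        + 2 * (∑ j ∈ Finset.Icc 1 (m+1), s j)
        + 4 * (∑ j ∈ Finset.Icc 1 (m+1), e j * e (m+2-j))
        + 4 * (∑ j ∈ Finset.Icc 1 (m+1), e j)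
        + ((m : ℚ) + 1) := by
  have h : ∀ j : ℕ, (s j + 2 * e j + 1) * (s (m+2-j) + 2 * e (m+2-j) + 1)
      = s j * s (m+2-j) + 2*(s j * e (m+2-j)) + s j + 2*(e j * s (m+2-j))
        + 4*(e j * e (m+2-j)) + 2*(e j) + s (m+2-j) + 2*(e (m+2-j)) + 1 :=
    fun j => by ring
  rw [Finset.sum_congr rfl (fun j _ => h j)]
  simp only [Finset.sum_add_distrib, ← Finset.mul_sum, Finset.sum_const, Nat.card_Icc,
    nsmul_eq_mul]
  have r1 : ∑ j ∈ Finset.Icc 1 (m+1), e j * s (m+2-j)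
      = ∑ j ∈ Finset.Icc 1 (m+1), s j * e (m+2-j) := by
    rw [← sum_reflect (m+1) (fun j => s j * e (m+2-j))]
    refine Finset.sum_congr rfl fun j hj => ?_
    have hj' := Finset.mem_Icc.mp hj
    rw [show m+2-(m+1+1-j) = j by omega, show m+1+1-j = m+2-j by omega, mul_comm]
  have r2 : ∑ j ∈ Finset.Icc 1 (m+1), s (m+2-j) = ∑ j ∈ Finset.Icc 1 (m+1), s j := by
    rw [show (fun j => s (m+2-j)) = (fun j => s (m+1+1-j)) from rfl]
    exact sum_reflect (m+1) s
  have r3 : ∑ j ∈ Finset.Icc 1 (m+1), e (m+2-j) = ∑ j ∈ Finset.Icc 1 (m+1), e j :=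
    sum_reflect (m+1) e
  rw [r1, r2, r3]
  push_cast
  ring

end PTree


/-- The Yule–Harding second moments of the number of root configurations satisfy `s_1 = 0`
and, for `n ≥ 2`,
`s_n = 1 + (1/(n−1))·Σ s_j s_{n−j} + (2/(n−1))·Σ s_j + (4/(n−1))·Σ s_j e_{n−j}
     + (4/(n−1))·Σ e_j e_{n−j} + (4/(n−1))·Σ e_j`, sums over `j = 1, …, n−1`. -/
theorem s_recurrence :
    PTree.s 1 = 0 ∧
    ∀ n : ℕ, 2 ≤ n →
      PTree.s n =
        1 + (1 / ((n : ℚ) - 1)) * ∑ j ∈ Finset.Icc 1 (n - 1), PTree.s j * PTree.s (n - j)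
          + (2 / ((n : ℚ) - 1)) * ∑ j ∈ Finset.Icc 1 (n - 1), PTree.s j
          + (4 / ((n : ℚ) - 1)) * ∑ j ∈ Finset.Icc 1 (n - 1), PTree.s j * PTree.e (n - j)
          + (4 / ((n : ℚ) - 1)) * ∑ j ∈ Finset.Icc 1 (n - 1), PTree.e j * PTree.e (n - j)
          + (4 / ((n : ℚ) - 1)) * ∑ j ∈ Finset.Icc 1 (n - 1), PTree.e j := by
  constructor
  · simp [PTree.s, PTree.trees, PTree.c]
  · intro n hn
    obtain ⟨m, rfl⟩ : ∃ m, n = m + 2 := ⟨n - 2, by omega⟩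
    have hsub : m + 2 - 1 = m + 1 := rfl
    have hcast : ((m + 2 : ℕ) : ℚ) - 1 = (m : ℚ) + 1 := by push_cast; ring
    have h0 : ((m : ℚ) + 1) ≠ 0 := by positivity
    have hk := PTree.key m
    rw [PTree.expand_sum m] at hk
    rw [hsub, hcast]
    field_simp
    linarith [hk]
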